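/- arXiv:1308.2715 — 2 statements merged into one kernel-verified Lean document; each statement's English description precedes it below -/
import Mathlib

section
/- Let p be a prime and let R be a ring whose additive group has finite exponent p^m. If R is left p-nil or right p-nil, then the adjoint group R∘ is nilpotent of class at most m. -/
/-- The adjoint group `R∘` of a non-unital ring `R`: the group of invertible elements of the
monoid `(R, ∘)` where `x ∘ y = x + y + x * y`. -/
abbrev AdjointGroup (R : Type*) [NonUnitalRing R] : Type _ := (PreQuasiregular R)ˣ

/-- A ring is left `p`-nil if every `x` with `p • x = 0` (`4 • x = 0` when `p = 2`) is a left
annihilator. -/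
def IsLeftPNil (p : ℕ) (R : Type*) [NonUnitalRing R] : Prop :=
  ∀ x : R, (if p = 2 then 4 else p) • x = 0 → ∀ y : R, x * y = 0

/-- A ring is right `p`-nil if every `x` with `p • x = 0` (`4 • x = 0` when `p = 2`) is a right
annihilator. -/
def IsRightPNil (p : ℕ) (R : Type*) [NonUnitalRing R] : Prop :=
  ∀ x : R, (if p = 2 then 4 else p) • x = 0 → ∀ y : R, y * x = 0

/-!
If `R` is left `p`-nil and `p ^ (i + 1) • x = 0`, then `p ^ i • x` is `p`-torsion, so
`p ^ i • (x * y) = (p ^ i • x) * y = 0`. Peeling off the last factor of a product of `k + 1`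
elements therefore lowers the exponent that kills it by one, and `R ^ (m + 1) = 0`; the right
`p`-nil case peels off the first factor instead.

In `R∘` the commutator of `g` and `h` has value `(g h - h g) (1 + q)` with `q` the value of
`(h ∘ g)⁻¹`, so commutators of `1 + R ^ (k + 1)` with `R∘` lie in `1 + R ^ (k + 2)`. Hence the
`k`-th term of the lower central series lies in `1 + R ^ (k + 1)`, which is trivial for `k = m`.
-/

open scoped Pointwise commutatorElement

section RingPow

variable (R : Type*) [NonUnitalRing R]

/-- `ringPowSucc R k` is `R ^ (k + 1)`, spanned by the products of `k + 1` elements. -/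
def ringPowSucc : ℕ → AddSubgroup R
  | 0 => ⊤
  | k + 1 => ringPowSucc k * ⊤

variable {R}

lemma ringPowSucc_succ (k : ℕ) : ringPowSucc R (k + 1) = ringPowSucc R k * ⊤ := rfl

lemma ringPowSucc_succ' (k : ℕ) : ringPowSucc R (k + 1) = ⊤ * ringPowSucc R k := by
  induction k with
  | zero => rfl
  | succ k ih =>
    calc ringPowSucc R (k + 2) = ⊤ * ringPowSucc R k * ⊤ := by rw [ringPowSucc_succ, ih]
      _ = ⊤ * (ringPowSucc R k * ⊤) := AddSubgroup.toAddSubmonoid_injective (mul_assoc _ _ _)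

lemma ringPowSucc_succ_le (k : ℕ) : ringPowSucc R (k + 1) ≤ ringPowSucc R k := by
  induction k with
  | zero => exact le_top
  | succ k ih =>
    rw [← AddSubgroup.toAddSubmonoid_le] at ih ⊢
    exact AddSubmonoid.mul_le_mul_left ih

end RingPow

section Torsion

variable {R : Type*} [NonUnitalRing R] {n : ℕ}

lemma nsmul_eq_zero_of_mem_ringPowSucc
    (hmul : ∀ (i : ℕ) (x y : R), n ^ (i + 1) • x = 0 → n ^ i • (x * y) = 0) {j k : ℕ}
    (hexp : ∀ x : R, n ^ (j + k) • x = 0) {x : R} (hx : x ∈ ringPowSucc R k) : n ^ j • x = 0 := by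
  induction k generalizing j x with
  | zero => exact hexp x
  | succ k ih =>
    refine AddSubmonoid.mul_induction_on (C := fun x => n ^ j • x = 0) hx ?_ ?_
    · exact fun y hy z _ => hmul j y z (ih (fun x => by rw [add_right_comm]; exact hexp x) hy)
    · exact fun y z hy hz => by rw [nsmul_add, hy, hz, add_zero]

lemma nsmul_eq_zero_of_mem_ringPowSucc'
    (hmul : ∀ (i : ℕ) (x y : R), n ^ (i + 1) • x = 0 → n ^ i • (y * x) = 0) {j k : ℕ}
    (hexp : ∀ x : R, n ^ (j + k) • x = 0) {x : R} (hx : x ∈ ringPowSucc R k) : n ^ j • x = 0 := by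
  induction k generalizing j x with
  | zero => exact hexp x
  | succ k ih =>
    rw [ringPowSucc_succ'] at hx
    refine AddSubmonoid.mul_induction_on (C := fun x => n ^ j • x = 0) hx ?_ ?_
    · exact fun z _ y hy => hmul j y z (ih (fun x => by rw [add_right_comm]; exact hexp x) hy)
    · exact fun y z hy hz => by rw [nsmul_add, hy, hz, add_zero]

end Torsion

section PNil

variable {p : ℕ} {R : Type*} [NonUnitalRing R]

lemma ite_nsmul_eq_zero_of_nsmul_eq_zero {x : R} (hx : p • x = 0) :
    (if p = 2 then 4 else p) • x = 0 := by
  split_ifs with hp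
  · rw [show 4 = 2 * 2 from rfl, mul_nsmul, ← hp, hx, nsmul_zero]
  · exact hx

lemma IsLeftPNil.pow_nsmul_mul_eq_zero (h : IsLeftPNil p R) (i : ℕ) (x y : R)
    (hx : p ^ (i + 1) • x = 0) : p ^ i • (x * y) = 0 := by
  rw [← smul_mul_assoc]
  refine h _ (ite_nsmul_eq_zero_of_nsmul_eq_zero ?_) y
  rwa [smul_smul, ← pow_succ']

lemma IsRightPNil.pow_nsmul_mul_eq_zero (h : IsRightPNil p R) (i : ℕ) (x y : R)
    (hx : p ^ (i + 1) • x = 0) : p ^ i • (y * x) = 0 := by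
  rw [← mul_smul_comm]
  refine h _ (ite_nsmul_eq_zero_of_nsmul_eq_zero ?_) y
  rwa [smul_smul, ← pow_succ']

variable {m : ℕ}

lemma IsLeftPNil.ringPowSucc_eq_bot (h : IsLeftPNil p R) (hexp : AddMonoid.exponent R = p ^ m) :
    ringPowSucc R m = ⊥ := by
  refine (AddSubgroup.eq_bot_iff_forall _).2 fun x hx => ?_
  simpa using nsmul_eq_zero_of_mem_ringPowSucc h.pow_nsmul_mul_eq_zero (j := 0)
    (fun y => by rw [zero_add, ← hexp]; exact AddMonoid.exponent_nsmul_eq_zero y) hx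

lemma IsRightPNil.ringPowSucc_eq_bot (h : IsRightPNil p R) (hexp : AddMonoid.exponent R = p ^ m) :
    ringPowSucc R m = ⊥ := by
  refine (AddSubgroup.eq_bot_iff_forall _).2 fun x hx => ?_
  simpa using nsmul_eq_zero_of_mem_ringPowSucc' h.pow_nsmul_mul_eq_zero (j := 0)
    (fun y => by rw [zero_add, ← hexp]; exact AddMonoid.exponent_nsmul_eq_zero y) hx

end PNil

namespace AdjointGroup

variable {R : Type*} [NonUnitalRing R]

/-- The congruence subgroup `1 + I` of `R∘`, for a right ideal `I`. -/
def congruenceSubgroup (I : AddSubgroup R) (hI : I * ⊤ ≤ I) : Subgroup (AdjointGroup R) where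
  carrier := {g | g.val.val ∈ I}
  one_mem' := I.zero_mem
  mul_mem' {g h} hg hh := add_mem (add_mem hh hg) (hI (AddSubmonoid.mul_mem_mul hg trivial))
  inv_mem' {g} hg := by
    have hinv : g⁻¹.val.val = -(g.val.val + g.val.val * g⁻¹.val.val) :=
      eq_neg_of_add_eq_zero_left <| by
        rw [← add_assoc]; exact PreQuasiregular.inv_add_add_mul_eq_zero g
    change g⁻¹.val.val ∈ I
    rw [hinv]
    exact neg_mem (add_mem hg (hI (AddSubmonoid.mul_mem_mul hg trivial)))

lemma val_val_commutatorElement (g h : AdjointGroup R) :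
    ⁅g, h⁆.val.val = (g.val.val * h.val.val - h.val.val * g.val.val) +
      (g.val.val * h.val.val - h.val.val * g.val.val) * (h * g)⁻¹.val.val := by
  have hinv := PreQuasiregular.inv_add_add_mul_eq_zero (h * g)
  rw [show ⁅g, h⁆ = g * h * (h * g)⁻¹ by group]
  simp only [Units.val_mul, PreQuasiregular.val_mul] at hinv ⊢
  rw [← sub_eq_zero, ← hinv]
  noncomm_ring

lemma commutatorElement_mem_congruenceSubgroup {I J : AddSubgroup R} (hI : I * ⊤ ≤ I)
    (hJ : J * ⊤ ≤ J) (hIJ : I * ⊤ ≤ J) (hIJ' : ⊤ * I ≤ J) {g : AdjointGroup R}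
    (hg : g ∈ congruenceSubgroup I hI) (h : AdjointGroup R) :
    ⁅g, h⁆ ∈ congruenceSubgroup J hJ := by
  have hd : g.val.val * h.val.val - h.val.val * g.val.val ∈ J :=
    sub_mem (hIJ (AddSubmonoid.mul_mem_mul hg trivial))
      (hIJ' (AddSubmonoid.mul_mem_mul trivial hg))
  change ⁅g, h⁆.val.val ∈ J
  rw [val_val_commutatorElement]
  exact add_mem hd (hJ (AddSubmonoid.mul_mem_mul hd trivial))

lemma lowerCentralSeries_le_congruenceSubgroup (k : ℕ) :
    (⊤ : Subgroup (AdjointGroup R)).lowerCentralSeries k ≤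
      congruenceSubgroup (ringPowSucc R k) (ringPowSucc_succ_le k) := by
  induction k with
  | zero => exact fun g _ => AddSubgroup.mem_top g.val.val
  | succ k ih =>
    rw [Subgroup.lowerCentralSeries_succ, Subgroup.commutator_le]
    exact fun g hg h _ =>
      commutatorElement_mem_congruenceSubgroup _ _ le_rfl (ringPowSucc_succ' k).ge (ih hg) h

lemma congruenceSubgroup_eq_bot {I : AddSubgroup R} (hI : I * ⊤ ≤ I) (h : I = ⊥) :
    congruenceSubgroup I hI = ⊥ := by
  subst h
  exact eq_bot_iff.2 fun _ hg => Units.ext (congrArg PreQuasiregular.mk hg)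

lemma lowerCentralSeries_eq_bot_of_ringPowSucc_eq_bot {m : ℕ} (h : ringPowSucc R m = ⊥) :
    (⊤ : Subgroup (AdjointGroup R)).lowerCentralSeries m = ⊥ := by
  rw [eq_bot_iff, ← congruenceSubgroup_eq_bot _ h]
  exact lowerCentralSeries_le_congruenceSubgroup m

end AdjointGroup

theorem pNil_adjointGroup_nilpotent_general (p m : ℕ) (R : Type*) [NonUnitalRing R]
    (hexp : AddMonoid.exponent R = p ^ m)
    (hnil : IsLeftPNil p R ∨ IsRightPNil p R) :
    (⊤ : Subgroup (AdjointGroup R)).lowerCentralSeries m = ⊥ := by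
  apply AdjointGroup.lowerCentralSeries_eq_bot_of_ringPowSucc_eq_bot
  rcases hnil with hL | hR
  exacts [hL.ringPowSucc_eq_bot hexp, hR.ringPowSucc_eq_bot hexp]

/-- **Theorem 2.2 (group part).** Let `R` be a ring whose additive group has finite exponent
`p ^ m`. If `R` is left or right `p`-nil, then the adjoint group `R∘` is nilpotent of class at
most `m`. -/
theorem pNil_adjointGroup_nilpotent (p m : ℕ) (hp : p.Prime) (R : Type*) [NonUnitalRing R]
    (hexp : AddMonoid.exponent R = p ^ m)
    (hnil : IsLeftPNil p R ∨ IsRightPNil p R) :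
    (⊤ : Subgroup (AdjointGroup R)).lowerCentralSeries m = ⊥ :=
  pNil_adjointGroup_nilpotent_general p m R hexp hnil
end

section
/- Let p be a prime and G a finite p-group. Then the center of the group Aut_{P(G)}(G) has exponent at most p^{min{r,s}}, where exp(G/[G,G]) = p^r and exp(Z(G)) = p^s. -/
/-- `P(G)`: the subgroup `γ₂(G)·G^p` for odd `p`, and `γ₂(G)·G⁴` for `p = 2`, where `G^m` is the
subgroup generated by `m`-th powers. -/
def groupP (p : ℕ) (G : Type*) [Group G] : Subgroup G :=
  commutator G ⊔ Subgroup.closure {x : G | ∃ g : G, g ^ (if p = 2 then 4 else p) = x}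

/-- `Aut_N(G)`: the group of automorphisms `u` of `G` such that `x⁻¹ · u x ∈ N` for all `x`. -/
def autSub {G : Type*} [Group G] (N : Subgroup G) : Subgroup (G ≃* G) where
  carrier := {u : G ≃* G | ∀ x : G, x⁻¹ * u x ∈ N}
  one_mem' := by
    intro x
    simpa using N.one_mem
  mul_mem' := by
    intro u v hu hv x
    have h := N.mul_mem (hv x) (hu (v x))
    simpa [MulAut.mul_apply, mul_assoc] using h
  inv_mem' := by
    intro u hu x
    have h := N.inv_mem (hu (u⁻¹ x))
    have hx : u (u⁻¹ x) = x := by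
      simp [MulAut.inv_def]
    rw [hx] at h
    simpa [mul_inv_rev] using h

/-!
Let `u` be central in `Aut_{P(G)}(G)`. As `[G,G] ≤ P(G)`, all inner automorphisms lie in
`Aut_{P(G)}(G)`; commuting with them forces `F x := x⁻¹ · u x` into `Z(G)`, so `F : G → Z(G)` is a
homomorphism whose values have order dividing both `p ^ r` and `p ^ s`. With `φ` the restriction of
`F` to `Z(G)`, induction gives `u ^ n x = x · ∏_{i < n} φ^i (F x) ^ C(n, i + 1)`. Since `F` kills
`[G,G]`, sends `p`-th (resp. `4`-th) powers to `p`-th powers and `F x ∈ P(G)`, each `φ^i (F x)` is a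
`p ^ i`-th power of a value of `F`; as `p ^ m ∣ p ^ i · C(p ^ m, i + 1)`, all factors vanish for
`n = p ^ m`, `m = min r s`.
-/

open Finset

theorem Nat.Prime.pow_dvd_pow_mul_choose_succ {p : ℕ} (hp : p.Prime) (m i : ℕ) :
    p ^ m ∣ p ^ i * (p ^ m).choose (i + 1) := by
  rcases le_or_gt (p ^ m) i with hi | hi
  · simp [Nat.choose_eq_zero_of_lt (Nat.lt_succ_of_le hi)]
  have hsum := Nat.factorization_choose_prime_pow_add_factorization hp hi i.succ_ne_zero
  have hlt := Nat.factorization_lt p i.succ_ne_zero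
  have hchoose : p ^ (m - i) ∣ (p ^ m).choose (i + 1) :=
    (hp.pow_dvd_iff_le_factorization (Nat.choose_pos hi).ne').2 (by omega)
  calc p ^ m ∣ p ^ i * p ^ (m - i) := by rw [← pow_add]; exact pow_dvd_pow p (by omega)
    _ ∣ p ^ i * (p ^ m).choose (i + 1) := mul_dvd_mul_left _ hchoose

section IterateChoose

variable {A : Type*} [CommMonoid A] (φ : A →* A)

theorem prod_range_succ_iterate_pow_choose (a : A) (n : ℕ) :
    ∏ i ∈ range (n + 1), (φ^[i] a) ^ (n + 1).choose (i + 1) =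
      (∏ i ∈ range n, (φ^[i] a) ^ n.choose (i + 1)) *
        (a * φ (∏ i ∈ range n, (φ^[i] a) ^ n.choose (i + 1))) := by
  have hshift : a * φ (∏ i ∈ range n, (φ^[i] a) ^ n.choose (i + 1)) =
      ∏ i ∈ range (n + 1), (φ^[i] a) ^ n.choose i := by
    simp only [map_prod, map_pow, ← Function.iterate_succ_apply' φ]
    rw [prod_range_succ' _ n, Function.iterate_zero_apply, Nat.choose_zero_right, pow_one, mul_comm]
  have hextend : ∏ i ∈ range n, (φ^[i] a) ^ n.choose (i + 1) =
      ∏ i ∈ range (n + 1), (φ^[i] a) ^ n.choose (i + 1) := by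
    rw [prod_range_succ, Nat.choose_succ_self, pow_zero, mul_one]
  rw [hshift, hextend, mul_comm, ← prod_mul_distrib]
  simp only [Nat.choose_succ_succ', pow_add]

theorem exists_iterate_apply_eq_pow {X : Type*} {F : X → A} {p : ℕ}
    (hφ : ∀ x, ∃ y, φ (F x) = F y ^ p) (i : ℕ) (x : X) : ∃ y, φ^[i] (F x) = F y ^ p ^ i := by
  induction i generalizing x with
  | zero => exact ⟨x, by simp⟩
  | succ i ih =>
    obtain ⟨z, hz⟩ := hφ x
    obtain ⟨y, hy⟩ := ih z
    exact ⟨y, by rw [Function.iterate_succ_apply, hz, iterate_map_pow, hy, ← pow_mul, pow_succ]⟩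

theorem prod_iterate_pow_choose_eq_one {X : Type*} {F : X → A} {p m : ℕ} (hp : p.Prime)
    (hφ : ∀ x, ∃ y, φ (F x) = F y ^ p) (hexp : ∀ x, F x ^ p ^ m = 1) (x : X) :
    ∏ i ∈ range (p ^ m), (φ^[i] (F x)) ^ (p ^ m).choose (i + 1) = 1 := by
  refine prod_eq_one fun i _ => ?_
  obtain ⟨y, hy⟩ := exists_iterate_apply_eq_pow φ hφ i x
  obtain ⟨d, hd⟩ := hp.pow_dvd_pow_mul_choose_succ m i
  rw [hy, ← pow_mul, hd, pow_mul, hexp, one_pow]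

end IterateChoose

open scoped IsMulCommutative

section CentralAutomorphism

open Subgroup

variable {G : Type*} [Group G]

theorem pow_exponent_commutator_quotient_eq_one {A : Type*} [CommGroup A] (f : G →* A) (x : G) :
    f x ^ Monoid.exponent (G ⧸ commutator G) = 1 := by
  rw [← Abelianization.lift_apply_of f, ← map_pow]
  exact (congrArg _ (Monoid.pow_exponent_eq_one (Abelianization.of x))).trans (map_one _)

theorem exists_apply_eq_pow_of_mem_groupP {A : Type*} [CommGroup A] (f : G →* A) {p : ℕ} {g : G}
    (hg : g ∈ groupP p G) : ∃ y, f g = f y ^ p := by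
  suffices groupP p G ≤ (f.range.map (powMonoidHom p)).comap f by
    obtain ⟨_, ⟨y, rfl⟩, hy⟩ := this hg
    exact ⟨y, hy.symm⟩
  refine sup_le ((Abelianization.commutator_subset_ker f).trans fun g hg => ?_) ?_
  · rw [mem_comap, MonoidHom.mem_ker.1 hg]
    exact one_mem _
  · rw [closure_le]
    rintro _ ⟨g, rfl⟩
    have hexp : (if p = 2 then 4 else p) = (if p = 2 then 2 else 1) * p := by split_ifs <;> simp_all
    exact ⟨f (g ^ (if p = 2 then 2 else 1)), ⟨_, rfl⟩,
      by rw [powMonoidHom_apply, ← map_pow, ← pow_mul, ← hexp]⟩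

theorem conj_mem_autSub {N : Subgroup G} (hN : commutator G ≤ N) (g : G) :
    MulAut.conj g ∈ autSub N := fun x => hN <| by
  rw [commutator_def]
  simpa [commutatorElement_def, mul_assoc] using
    commutator_mem_commutator (mem_top x⁻¹) (mem_top g)

theorem mem_autSub_center_of_mem_center {N : Subgroup G} (hN : commutator G ≤ N)
    {u : autSub N} (hu : u ∈ center (autSub N)) : (u : G ≃* G) ∈ autSub (center G) := by
  intro g
  rw [mem_center_iff]
  intro y
  obtain ⟨x, rfl⟩ := (u : G ≃* G).surjective y
  have hcomm := congrArg (fun v : autSub N => (v : G ≃* G) x)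
    (mem_center_iff.1 hu ⟨MulAut.conj g, conj_mem_autSub hN g⟩)
  simp only [Subgroup.coe_mul, MulAut.mul_apply, MulAut.conj_apply, map_mul, map_inv] at hcomm
  have := congrArg (fun z => g⁻¹ * z * (u : G ≃* G) g) hcomm
  simpa [mul_assoc] using this

def centralDisplacement (u : autSub (center G)) : G →* center G where
  toFun x := ⟨x⁻¹ * (u : G ≃* G) x, u.2 x⟩
  map_one' := by ext; simp
  map_mul' x y := by
    ext
    have hxy := mem_center_iff.1 (u.2 x) y⁻¹
    simp only [map_mul, mul_inv_rev, Subgroup.coe_mul]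
    calc y⁻¹ * x⁻¹ * ((u : G ≃* G) x * (u : G ≃* G) y)
        = y⁻¹ * (x⁻¹ * (u : G ≃* G) x) * (u : G ≃* G) y := by simp only [mul_assoc]
      _ = x⁻¹ * (u : G ≃* G) x * (y⁻¹ * (u : G ≃* G) y) := by rw [hxy, mul_assoc]

theorem apply_eq_mul_centralDisplacement (u : autSub (center G)) (x : G) :
    (u : G ≃* G) x = x * centralDisplacement u x :=
  (mul_inv_cancel_left x _).symm

theorem pow_apply_eq_mul_prod_centralDisplacement (u : autSub (center G)) (n : ℕ) (x : G) :
    ((u : G ≃* G) ^ n) x = x * ↑(∏ i ∈ range n,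
      (((centralDisplacement u).comp (center G).subtype)^[i] (centralDisplacement u x)) ^
        n.choose (i + 1)) := by
  induction n with
  | zero => simp
  | succ n ih =>
    rw [pow_succ', MulAut.mul_apply, ih, apply_eq_mul_centralDisplacement, map_mul,
      prod_range_succ_iterate_pow_choose, Subgroup.coe_mul, Subgroup.coe_mul, mul_assoc]
    rfl

theorem pow_prime_pow_eq_one_of_centralDisplacement {p m : ℕ} (hp : p.Prime) (u : autSub (center G))
    (hφ : ∀ x, ∃ y,
      centralDisplacement u (centralDisplacement u x) = centralDisplacement u y ^ p)
    (hexp : ∀ x, centralDisplacement u x ^ p ^ m = 1) : (u : G ≃* G) ^ p ^ m = 1 := by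
  ext x
  rw [pow_apply_eq_mul_prod_centralDisplacement, prod_iterate_pow_choose_eq_one _ hp hφ hexp]
  simp

end CentralAutomorphism

theorem center_autSub_exponent_le_general (p r s : ℕ) (hp : p.Prime) (G : Type*) [Group G]
    (hr : Monoid.exponent (G ⧸ commutator G) = p ^ r)
    (hs : Monoid.exponent ↥(Subgroup.center G) = p ^ s) :
    Monoid.exponent ↥(Subgroup.center ↥(autSub (groupP p G))) ≤ p ^ min r s := by
  refine Nat.le_of_dvd (pow_pos hp.pos _) (Monoid.exponent_dvd_of_forall_pow_eq_one fun u => ?_)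
  let F := centralDisplacement ⟨_, mem_autSub_center_of_mem_center le_sup_left u.2⟩
  have hφ : ∀ x, ∃ y, F (F x) = F y ^ p := fun x =>
    exists_apply_eq_pow_of_mem_groupP F (g := (F x : G)) (u.1.2 x)
  have hexp : ∀ x, F x ^ p ^ min r s = 1 := by
    intro x
    have hFr := hr ▸ pow_exponent_commutator_quotient_eq_one F x
    have hFs := hs ▸ Monoid.pow_exponent_eq_one (F x)
    rcases min_choice r s with h | h <;> rwa [h]
  exact Subtype.ext (Subtype.ext (pow_prime_pow_eq_one_of_centralDisplacement hp _ hφ hexp))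

/-- **Lemma 3.3.** Let `G` be a finite `p`-group. Then the center of `Aut_{P(G)}(G)` has
exponent at most `p ^ min r s`, where `exp(G/[G,G]) = p ^ r` and `exp(Z(G)) = p ^ s`. -/
theorem center_autSub_exponent_le (p r s : ℕ) (hp : p.Prime) (G : Type*) [Group G] [Finite G]
    (hG : IsPGroup p G)
    (hr : Monoid.exponent (G ⧸ commutator G) = p ^ r)
    (hs : Monoid.exponent ↥(Subgroup.center G) = p ^ s) :
    Monoid.exponent ↥(Subgroup.center ↥(autSub (groupP p G))) ≤ p ^ min r s :=
  center_autSub_exponent_le_general p r s hp G hr hs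
end
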